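/- If x is a double with 2^k ≤ |x| < 2^{k+1} and r is any real number that is not an integer multiple of 2^{k-53}, then for every double y, the exact value x + y is distinct from r; hence observing output r rules out x as the value to which noise was added. -/

import Mathlib

/-!
Every double `z` with `2^e ≤ |z|` lies on the grid `2^(e-52) ℤ`, and `fpRound t` lies on the
grid `2^(log₂|t| - 52) ℤ` of its own binade. If `x + y` is not much smaller than `x`
(`log₂|x + y| ≥ k - 1`), its rounding lies on `2^(k-53) ℤ` for that reason alone. Otherwise
cancellation forces `|y| ≥ 2^(k-1)`, so `x + y` is exactly on `2^(k-53) ℤ`, which is finer than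
the grid of its binade; then the rounding is exact.
-/

/-- A (normal) IEEE 754 double, or zero. -/
def IsDouble (z : ℝ) : Prop :=
  z = 0 ∨ ∃ (s : Bool) (m e : ℤ), 2 ^ 52 ≤ m ∧ m < 2 ^ 53 ∧
    z = (if s then (-1 : ℝ) else 1) * (m : ℝ) * (2 : ℝ) ^ (e - 52)

/-- Correctly rounded value: round a real to the nearest multiple of the ulp of its
own binade (ulp of `t` is `2^(Int.log 2 |t| - 52)`). -/
noncomputable def fpRound (t : ℝ) : ℝ :=
  ((round (t / (2 : ℝ) ^ (Int.log 2 |t| - 52)) : ℤ) : ℝ) * (2 : ℝ) ^ (Int.log 2 |t| - 52)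

open AddSubgroup

lemma zmultiples_two_zpow_antitone : Antitone fun e : ℤ ↦ zmultiples ((2 : ℝ) ^ e) := by
  intro e e' h
  simp only [zmultiples_le, mem_zmultiples_iff, zsmul_eq_mul]
  refine ⟨2 ^ (e' - e).toNat, ?_⟩
  push_cast
  rw [← zpow_natCast, Int.toNat_of_nonneg (by omega), ← zpow_add₀ two_ne_zero, sub_add_cancel]

lemma fpRound_mem_zmultiples (t : ℝ) :
    fpRound t ∈ zmultiples ((2 : ℝ) ^ (Int.log 2 |t| - 52)) :=
  ⟨round (t / (2 : ℝ) ^ (Int.log 2 |t| - 52)), zsmul_eq_mul _ _⟩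

lemma fpRound_eq_self {t : ℝ} (h : t ∈ zmultiples ((2 : ℝ) ^ (Int.log 2 |t| - 52))) :
    fpRound t = t := by
  set ulp := (2 : ℝ) ^ (Int.log 2 |t| - 52)
  obtain ⟨n, hn⟩ := mem_zmultiples_iff.mp h
  have hulp : ulp ≠ 0 := zpow_ne_zero _ two_ne_zero
  have hquot : t / ulp = n := by rw [← hn, zsmul_eq_mul, mul_div_cancel_right₀ _ hulp]
  show (round (t / ulp) : ℝ) * ulp = t
  rw [hquot, round_intCast, ← hquot, div_mul_cancel₀ _ hulp]

lemma fpRound_mem_zmultiples_of_mem {t : ℝ} {e : ℤ} (h : t ∈ zmultiples ((2 : ℝ) ^ e)) :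
    fpRound t ∈ zmultiples ((2 : ℝ) ^ e) := by
  rcases le_or_gt e (Int.log 2 |t| - 52) with hcoarse | hfine
  · exact zmultiples_two_zpow_antitone hcoarse (fpRound_mem_zmultiples t)
  · rwa [fpRound_eq_self (zmultiples_two_zpow_antitone hfine.le h)]

lemma IsDouble.mem_zmultiples {z : ℝ} {e : ℤ} (hz : IsDouble z) (he : (2 : ℝ) ^ e ≤ |z|) :
    z ∈ zmultiples ((2 : ℝ) ^ (e - 52)) := by
  obtain rfl | ⟨s, m, e', hm_low, hm_high, rfl⟩ := hz
  · exact zero_mem _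
  have hm_pos : (0 : ℝ) < m := by
    exact_mod_cast (by positivity : (0 : ℤ) < 2 ^ 52).trans_le hm_low
  have habs : |(if s then (-1 : ℝ) else 1) * m * 2 ^ (e' - 52)| = m * 2 ^ (e' - 52) := by
    cases s <;> simp [abs_mul, abs_of_pos hm_pos]
  have hm' : (m : ℝ) < 2 ^ (53 : ℤ) := by exact_mod_cast hm_high
  have hee' : e ≤ e' := by
    have : (2 : ℝ) ^ e < 2 ^ (e' + 1) :=
      calc (2 : ℝ) ^ e ≤ m * 2 ^ (e' - 52) := habs ▸ he
        _ < 2 ^ (53 : ℤ) * 2 ^ (e' - 52) := by gcongr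
        _ = 2 ^ (e' + 1) := by rw [← zpow_add₀ two_ne_zero]; ring_nf
    exact Int.lt_add_one_iff.mp ((zpow_lt_zpow_iff_right₀ one_lt_two).mp this)
  refine zmultiples_two_zpow_antitone (by omega : e - 52 ≤ e' - 52) ⟨if s then -m else m, ?_⟩
  cases s <;> simp [zsmul_eq_mul]

/-- if `x` is a double with `2^k ≤ |x| < 2^(k+1)` and `r` is not an
integer multiple of `2^(k-53)`, then for every double `y` the (correctly rounded)
sum `x ⊕ y` is distinct from `r`; observing output `r` rules out `x`. -/
theorem output_rules_out_input (x : ℝ) (k : ℤ) (hx : IsDouble x)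
    (hxk : (2 : ℝ) ^ k ≤ |x| ∧ |x| < (2 : ℝ) ^ (k + 1))
    (r : ℝ) (hr : ¬ ∃ n : ℤ, r = (n : ℝ) * (2 : ℝ) ^ (k - 53)) :
    ∀ y : ℝ, IsDouble y → fpRound (x + y) ≠ r := by
  intro y hy hround
  have hgrid : fpRound (x + y) ∈ zmultiples ((2 : ℝ) ^ (k - 53)) := by
    rcases le_or_gt (k - 1) (Int.log 2 |x + y|) with hlarge | hsmall
    · exact zmultiples_two_zpow_antitone (by omega) (fpRound_mem_zmultiples _)
    have hsum : |x + y| < 2 ^ (k - 1) :=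
      (Int.lt_zpow_succ_log_self one_lt_two _).trans_le
        (zpow_le_zpow_right₀ one_le_two (by omega))
    have hy_large : (2 : ℝ) ^ (k - 1) ≤ |y| := by
      have hhalf : (2 : ℝ) ^ k = 2 * 2 ^ (k - 1) := by
        rw [← zpow_one_add₀ two_ne_zero, add_sub_cancel]
      have := abs_sub (x + y) y
      rw [add_sub_cancel_right] at this
      linarith [hxk.1]
    apply fpRound_mem_zmultiples_of_mem
    refine add_mem (zmultiples_two_zpow_antitone (by omega) (hx.mem_zmultiples hxk.1)) ?_
    simpa [sub_sub] using hy.mem_zmultiples hy_large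
  obtain ⟨n, hn⟩ := mem_zmultiples_iff.mp hgrid
  exact hr ⟨n, by rw [← hround, ← hn, zsmul_eq_mul]⟩
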